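/- If X = Y (the side information equals the source) and K = 2 in the switching side-information setup, then the minimal value of max_{j∈{1,2}} H(X|Y_j,A) + I(X;A) over all conditional distributions p(a|x) with A ∈ {1,2} equals H(X)/2, achieved by A uniform on {1,2} independent of X. -/

import Mathlib

open Finset

section Defs

/-- Probability of the event `X = x` under the mass function `μ`. -/
noncomputable def pr {Ω : Type*} [Fintype Ω] (μ : Ω → ℝ) {α : Type*} [Fintype α]
    [DecidableEq α] (X : Ω → α) (x : α) : ℝ :=
  ∑ ω, if X ω = x then μ ω else 0

/-- Shannon entropy (base 2) of a finitely valued random variable. -/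
noncomputable def ent {Ω : Type*} [Fintype Ω] (μ : Ω → ℝ) {α : Type*} [Fintype α]
    [DecidableEq α] (X : Ω → α) : ℝ :=
  - ∑ x, pr μ X x * Real.logb 2 (pr μ X x)

/-- Conditional entropy `H(X|Y) = H(X,Y) - H(Y)`. -/
noncomputable def condEnt {Ω : Type*} [Fintype Ω] (μ : Ω → ℝ) {α β : Type*}
    [Fintype α] [DecidableEq α] [Fintype β] [DecidableEq β]
    (X : Ω → α) (Y : Ω → β) : ℝ :=
  ent μ (fun ω => (X ω, Y ω)) - ent μ Y

/-- Mutual information `I(X;Y) = H(X) - H(X|Y)`. -/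
noncomputable def mi {Ω : Type*} [Fintype Ω] (μ : Ω → ℝ) {α β : Type*}
    [Fintype α] [DecidableEq α] [Fintype β] [DecidableEq β]
    (X : Ω → α) (Y : Ω → β) : ℝ :=
  ent μ X - condEnt μ X Y

/-- Conditional mutual information `I(X;Y|Z) = H(X|Z) - H(X|Y,Z)`. -/
noncomputable def cmi {Ω : Type*} [Fintype Ω] (μ : Ω → ℝ) {α β γ : Type*}
    [Fintype α] [DecidableEq α] [Fintype β] [DecidableEq β] [Fintype γ] [DecidableEq γ]
    (X : Ω → α) (Y : Ω → β) (Z : Ω → γ) : ℝ :=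
  condEnt μ X Z - condEnt μ X (fun ω => (Y ω, Z ω))

/-- `μ` is a probability mass function on the finite sample space `Ω`. -/
def IsProb {Ω : Type*} [Fintype Ω] (μ : Ω → ℝ) : Prop :=
  (∀ ω, 0 ≤ μ ω) ∧ ∑ ω, μ ω = 1

/-- `A` and `Y` are conditionally independent given `X` (Markov chain `A - X - Y`). -/
def CondIndep {Ω : Type*} [Fintype Ω] (μ : Ω → ℝ) {α β γ : Type*}
    [Fintype α] [DecidableEq α] [Fintype β] [DecidableEq β] [Fintype γ] [DecidableEq γ]
    (A : Ω → α) (Y : Ω → β) (X : Ω → γ) : Prop :=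
  ∀ a y x, pr μ (fun ω => (A ω, Y ω, X ω)) (a, y, x) * pr μ X x =
    pr μ (fun ω => (A ω, X ω)) (a, x) * pr μ (fun ω => (Y ω, X ω)) (y, x)

/-- Binary entropy function (base 2). -/
noncomputable def H2 (p : ℝ) : ℝ :=
  -(p * Real.logb 2 p) - (1 - p) * Real.logb 2 (1 - p)

end Defs

/-!
Writing `Y_j` for the `j`-th erased observation, `(X, Y_j, A)` carries the same information as
`(X, A)`, so the `j`-th objective is `H(X) + H(A) - H(Y_j, A) = H(X) - P(A = j) H(X | A = j)`.
Summing over the `K` values of `A` gives `K H(X) - H(X | A) ≥ (K - 1) H(X)` by subadditivity of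
entropy, so the larger of the objectives is at least `(1 - 1/K) H(X)`; when `A` is uniform and
independent of `X`, every objective equals `(1 - 1/K) H(X)`.
-/

open Real

section Entropy

variable {Ω α β : Type*} [Fintype Ω] [Fintype α] [DecidableEq α] [Fintype β] [DecidableEq β]

lemma ent_eq_sum_negMulLog (μ : Ω → ℝ) (X : Ω → α) :
    ent μ X = (∑ x, negMulLog (pr μ X x)) / log 2 := by
  simp only [ent, negMulLog, logb, sum_div, ← sum_neg_distrib]
  exact sum_congr rfl fun x _ => by ring

lemma pr_of_injective (μ : Ω → ℝ) {X : Ω → α} (hX : Function.Injective X) (ω : Ω) :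
    pr μ X (X ω) = μ ω := by
  classical
  simp [pr, hX.eq_iff]

lemma pr_eq_zero_of_notMem_range (μ : Ω → ℝ) {X : Ω → α} {x : α} (hx : x ∉ Set.range X) :
    pr μ X x = 0 :=
  sum_eq_zero fun ω _ => if_neg fun h => hx ⟨ω, h⟩

lemma ent_of_injective (μ : Ω → ℝ) {X : Ω → α} (hX : Function.Injective X) :
    ent μ X = (∑ ω, negMulLog (μ ω)) / log 2 := by
  rw [ent_eq_sum_negMulLog]
  congr 1
  refine (Fintype.sum_of_injective X hX _ _ (fun x hx => ?_) fun ω => ?_).symm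
  · rw [pr_eq_zero_of_notMem_range μ hx, negMulLog_zero]
  · rw [pr_of_injective μ hX]

lemma sum_pr (μ : Ω → ℝ) (X : Ω → α) : ∑ x, pr μ X x = ∑ ω, μ ω := by
  simp only [pr]
  rw [sum_comm]
  simp

lemma sum_pr_pair_eq_left (μ : Ω → ℝ) (X : Ω → α) (Y : Ω → β) (x : α) :
    ∑ y, pr μ (fun ω => (X ω, Y ω)) (x, y) = pr μ X x := by
  simp only [pr]
  rw [sum_comm]
  simp [Prod.mk.injEq, ite_and]

lemma sum_pr_pair_eq_right (μ : Ω → ℝ) (X : Ω → α) (Y : Ω → β) (y : β) :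
    ∑ x, pr μ (fun ω => (X ω, Y ω)) (x, y) = pr μ Y y := by
  simp only [pr]
  rw [sum_comm]
  simp [Prod.mk.injEq, ite_and]

lemma pr_nonneg {μ : Ω → ℝ} (hμ : ∀ ω, 0 ≤ μ ω) (X : Ω → α) (x : α) : 0 ≤ pr μ X x :=
  sum_nonneg fun ω _ => ite_nonneg (hμ ω) le_rfl

lemma sum_pr_pair_mul_log_left (μ : Ω → ℝ) (X : Ω → α) (Y : Ω → β) :
    ∑ z : α × β, pr μ (fun ω => (X ω, Y ω)) z * log (pr μ X z.1) =
      -∑ x, negMulLog (pr μ X x) := by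
  simp only [Fintype.sum_prod_type, ← sum_mul, sum_pr_pair_eq_left, negMulLog,
    ← sum_neg_distrib, neg_mul, neg_neg]

lemma sum_pr_pair_mul_log_right (μ : Ω → ℝ) (X : Ω → α) (Y : Ω → β) :
    ∑ z : α × β, pr μ (fun ω => (X ω, Y ω)) z * log (pr μ Y z.2) =
      -∑ y, negMulLog (pr μ Y y) := by
  simp only [Fintype.sum_prod_type_right, ← sum_mul, sum_pr_pair_eq_right, negMulLog,
    ← sum_neg_distrib, neg_mul, neg_neg]

end Entropy

lemma mul_log_sub_log_le_sub {u v : ℝ} (hu : 0 ≤ u) (hv : 0 < v) :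
    u * (log v - log u) ≤ v - u := by
  rcases hu.eq_or_lt with rfl | hu
  · simpa using hv.le
  · calc u * (log v - log u) = u * log (v / u) := by rw [log_div hv.ne' hu.ne']
      _ ≤ u * (v / u - 1) := mul_le_mul_of_nonneg_left (log_le_sub_one_of_pos (by positivity)) hu.le
      _ = v - u := by field_simp

theorem ent_pair_le_add {Ω α β : Type*} [Fintype Ω] [Fintype α] [DecidableEq α] [Fintype β]
    [DecidableEq β] {μ : Ω → ℝ} (hμ : IsProb μ) (X : Ω → α) (Y : Ω → β) :
    ent μ (fun ω => (X ω, Y ω)) ≤ ent μ X + ent μ Y := by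
  have hP : ∀ z, 0 ≤ pr μ (fun ω => (X ω, Y ω)) z := pr_nonneg hμ.1 _
  have hPX : ∀ z : α × β, pr μ (fun ω => (X ω, Y ω)) z ≤ pr μ X z.1 := fun z => by
    rw [← sum_pr_pair_eq_left μ X Y]
    exact single_le_sum (fun y _ => hP (z.1, y)) (mem_univ z.2)
  have hPY : ∀ z : α × β, pr μ (fun ω => (X ω, Y ω)) z ≤ pr μ Y z.2 := fun z => by
    rw [← sum_pr_pair_eq_right μ X Y]
    exact single_le_sum (fun x _ => hP (x, z.2)) (mem_univ z.1)
  -- Gibbs' inequality against the product of the marginals, one term at a time.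
  have hterm : ∀ z : α × β, negMulLog (pr μ (fun ω => (X ω, Y ω)) z)
      + pr μ (fun ω => (X ω, Y ω)) z * log (pr μ X z.1)
      + pr μ (fun ω => (X ω, Y ω)) z * log (pr μ Y z.2)
      ≤ pr μ X z.1 * pr μ Y z.2 - pr μ (fun ω => (X ω, Y ω)) z := by
    intro z
    rcases (hP z).eq_or_lt with h | h
    · rw [← h, negMulLog_zero]
      nlinarith [hP z, hPX z, hPY z]
    · have hX := h.trans_le (hPX z)
      have hY := h.trans_le (hPY z)
      have := mul_log_sub_log_le_sub h.le (mul_pos hX hY)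
      rw [log_mul hX.ne' hY.ne'] at this
      rw [negMulLog]
      linarith
  have hprod : ∑ z : α × β, pr μ X z.1 * pr μ Y z.2 = 1 := by
    rw [Fintype.sum_prod_type, ← Fintype.sum_mul_sum, sum_pr, sum_pr, hμ.2, one_mul]
  have hsum := sum_le_sum fun z (_ : z ∈ univ) => hterm z
  rw [sum_add_distrib, sum_add_distrib, sum_pr_pair_mul_log_left,
    sum_pr_pair_mul_log_right, sum_sub_distrib, hprod, sum_pr, hμ.2] at hsum
  rw [ent_eq_sum_negMulLog, ent_eq_sum_negMulLog, ent_eq_sum_negMulLog, ← add_div,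
    div_le_div_iff_of_pos_right (log_pos one_lt_two)]
  linarith

section Switching

variable {α ι : Type*} [Fintype α] [DecidableEq α] [Fintype ι] [DecidableEq ι]

-- The pair `(Y_j, A)`; `none` plays the erasure symbol `e`.
def erasure (j : ι) (ω : α × ι) : Option α × ι :=
  (if ω.2 = j then some ω.1 else none, ω.2)

noncomputable def switchCost (q : α × ι → ℝ) (j : ι) : ℝ :=
  condEnt q Prod.fst (erasure j) + mi q Prod.fst Prod.snd

lemma pr_fst_eq_sum (q : α × ι → ℝ) (x : α) : pr q Prod.fst x = ∑ a, q (x, a) := by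
  rw [← sum_pr_pair_eq_left q Prod.fst Prod.snd]
  exact sum_congr rfl fun a _ => pr_of_injective q (fun _ _ h => h) (x, a)

lemma pr_snd_eq_sum (q : α × ι → ℝ) (a : ι) : pr q Prod.snd a = ∑ x, q (x, a) := by
  rw [← sum_pr_pair_eq_right q Prod.fst Prod.snd]
  exact sum_congr rfl fun x _ => pr_of_injective q (fun _ _ h => h) (x, a)

lemma pr_erasure_some (q : α × ι → ℝ) (j a : ι) (x : α) :
    pr q (erasure j) (some x, a) = if a = j then q (x, a) else 0 := by
  rcases eq_or_ne a j with rfl | h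
  · simp [pr, erasure, Fintype.sum_prod_type, Prod.ext_iff, and_comm, ite_and]
  · rw [if_neg h]
    refine sum_eq_zero fun ω _ => if_neg fun hω => h ?_
    simp only [erasure, Prod.ext_iff] at hω
    split_ifs at hω with hj
    · exact hω.2 ▸ hj
    · simp at hω

lemma pr_erasure_none (q : α × ι → ℝ) (j a : ι) :
    pr q (erasure j) (none, a) = if a = j then 0 else pr q Prod.snd a := by
  rcases eq_or_ne a j with rfl | h
  · simp [pr, erasure, Prod.ext_iff]
  · rw [pr_snd_eq_sum]
    have hc : ∀ b : ι, (¬b = j ∧ b = a) ↔ b = a := fun b =>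
      and_iff_right_of_imp fun hb => hb ▸ h
    simp [pr, erasure, Fintype.sum_prod_type, Prod.ext_iff, h, hc]

lemma ent_erasure (q : α × ι → ℝ) (j : ι) :
    ent q (erasure j) = (∑ x, negMulLog (q (x, j))
      + ∑ a ∈ univ.erase j, negMulLog (pr q Prod.snd a)) / log 2 := by
  have hj : ∑ b : Option α, negMulLog (pr q (erasure j) (b, j)) = ∑ x, negMulLog (q (x, j)) := by
    simp [Fintype.sum_option, pr_erasure_some, pr_erasure_none]
  have ha : ∀ a ∈ univ.erase j,
      ∑ b : Option α, negMulLog (pr q (erasure j) (b, a)) = negMulLog (pr q Prod.snd a) := by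
    intro a ha
    simp [Fintype.sum_option, pr_erasure_some, pr_erasure_none, ne_of_mem_erase ha]
  rw [ent_eq_sum_negMulLog, Fintype.sum_prod_type_right,
    ← add_sum_erase _ _ (mem_univ j), hj, sum_congr rfl ha]

lemma switchCost_eq (q : α × ι → ℝ) (j : ι) :
    switchCost q j = ent q Prod.fst
      + (negMulLog (pr q Prod.snd j) - ∑ x, negMulLog (q (x, j))) / log 2 := by
  have hpair : ent q (fun ω => (ω.1, erasure j ω)) = ent q (fun ω => (ω.1, ω.2)) := by
    rw [ent_of_injective q (X := fun ω => (ω.1, erasure j ω))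
      fun _ _ h => Prod.ext (Prod.ext_iff.1 h).1 (Prod.ext_iff.1 (Prod.ext_iff.1 h).2).2,
      ent_of_injective q fun _ _ h => h]
  rw [switchCost, condEnt, mi, condEnt, hpair, ent_erasure, ent_eq_sum_negMulLog q Prod.snd,
    ← add_sum_erase _ _ (mem_univ j)]
  ring

lemma sum_switchCost (q : α × ι → ℝ) :
    ∑ j, switchCost q j =
      Fintype.card ι * ent q Prod.fst + ent q Prod.snd - ent q (fun ω => (ω.1, ω.2)) := by
  simp only [switchCost_eq, sum_add_distrib, ← sum_div, sum_sub_distrib,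
    sum_const, card_univ, nsmul_eq_mul]
  rw [ent_eq_sum_negMulLog q Prod.snd, ent_of_injective q fun _ _ h => h,
    Fintype.sum_prod_type_right]
  ring

theorem card_sub_one_mul_ent_le_sum_switchCost {q : α × ι → ℝ} (hq : IsProb q) :
    (Fintype.card ι - 1) * ent q Prod.fst ≤ ∑ j, switchCost q j := by
  have := ent_pair_le_add hq Prod.fst Prod.snd
  rw [sum_switchCost]
  linarith

variable (ι) in
noncomputable def indepUniform (pX : α → ℝ) (ω : α × ι) : ℝ :=
  pX ω.1 / Fintype.card ι

lemma pr_snd_indepUniform {pX : α → ℝ} (hpX : IsProb pX) (a : ι) :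
    pr (indepUniform ι pX) Prod.snd a = (Fintype.card ι : ℝ)⁻¹ := by
  rw [pr_snd_eq_sum]
  simp [indepUniform, ← sum_div, hpX.2]

variable [Nonempty ι]

lemma pr_fst_indepUniform (pX : α → ℝ) (x : α) : pr (indepUniform ι pX) Prod.fst x = pX x := by
  rw [pr_fst_eq_sum]
  simp [indepUniform]
  field_simp

lemma isProb_indepUniform {pX : α → ℝ} (hpX : IsProb pX) : IsProb (indepUniform ι pX) := by
  refine ⟨fun ω => div_nonneg (hpX.1 ω.1) (Nat.cast_nonneg _), ?_⟩
  rw [← sum_pr (indepUniform ι pX) Prod.snd]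
  simp [pr_snd_indepUniform hpX]

lemma switchCost_indepUniform {pX : α → ℝ} (hpX : IsProb pX) (j : ι) :
    switchCost (indepUniform ι pX) j =
      (1 - (Fintype.card ι : ℝ)⁻¹) * ent (indepUniform ι pX) Prod.fst := by
  have hsplit : ∑ x, negMulLog (indepUniform ι pX (x, j)) =
      (Fintype.card ι : ℝ)⁻¹ * ∑ x, negMulLog (pX x) + negMulLog (Fintype.card ι : ℝ)⁻¹ := by
    simp only [indepUniform, div_eq_mul_inv, negMulLog_mul, sum_add_distrib,
      ← mul_sum, ← sum_mul, hpX.2, one_mul]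
  rw [switchCost_eq, pr_snd_indepUniform hpX, hsplit, ent_eq_sum_negMulLog]
  simp only [pr_fst_indepUniform]
  ring

end Switching

/-- Switching side information with `Y = X` and `K = 2`:
over all joint distributions of `(X,A)` with the given marginal of `X`
(`A ∈ {1,2}`, `Y_j = X` if `A = j` and `= e` otherwise), the least value of
`max_{j∈{1,2}} H(X|Y_j,A) + I(X;A)` is `H(X)/2`. -/
theorem stmt4 {𝒳 : Type*} [Fintype 𝒳] [DecidableEq 𝒳] (pX : 𝒳 → ℝ)
    (hpX : (∀ x, 0 ≤ pX x) ∧ ∑ x, pX x = 1) :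
    IsLeast
      { r : ℝ | ∃ q : 𝒳 × Fin 2 → ℝ, IsProb q ∧
          (∀ x, pr q Prod.fst x = pX x) ∧
          r = max
            (condEnt q Prod.fst
                (fun ω => ((if ω.2 = 0 then some ω.1 else (none : Option 𝒳)), ω.2))
              + mi q Prod.fst Prod.snd)
            (condEnt q Prod.fst
                (fun ω => ((if ω.2 = 1 then some ω.1 else (none : Option 𝒳)), ω.2))
              + mi q Prod.fst Prod.snd) }
      ((- ∑ x, pX x * Real.logb 2 (pX x)) / 2) := by
  have hent : ∀ q : 𝒳 × Fin 2 → ℝ, (∀ x, pr q Prod.fst x = pX x) →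
      ent q Prod.fst = -∑ x, pX x * Real.logb 2 (pX x) := fun q hm => by
    simp only [ent, hm]
  constructor
  · refine ⟨indepUniform (Fin 2) pX, isProb_indepUniform hpX, pr_fst_indepUniform pX, ?_⟩
    show _ = max (switchCost _ 0) (switchCost _ 1)
    rw [switchCost_indepUniform hpX, switchCost_indepUniform hpX, max_self,
      hent _ (pr_fst_indepUniform pX), Fintype.card_fin]
    ring
  · rintro r ⟨q, hq, hm, rfl⟩
    show _ ≤ max (switchCost q 0) (switchCost q 1)
    have hsum := card_sub_one_mul_ent_le_sum_switchCost hq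
    rw [Fin.sum_univ_two, Fintype.card_fin, hent q hm] at hsum
    norm_num at hsum
    linarith [le_max_left (switchCost q 0) (switchCost q 1),
      le_max_right (switchCost q 0) (switchCost q 1)]
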